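/- Equality case of the core inequality: under the hypotheses that p is a probability density on [0,1], v: [0,1] → [0,∞) is measurable with ∫₀¹ v(c) p(c) dc = 1, and φ': [0,1] → (0,∞) satisfies ∫₀¹ φ'(c) v(c) p(c) dc = 1, equality ∫₀¹ (1/φ'(c)²) v(c) p(c) dc = 1 forces φ'(c) = 1 for almost every c with respect to the measure v(c)p(c)dc; in particular, if v·p is almost everywhere positive on [0,1] and φ' is continuous, then φ is the identity (φ linear with slope 1). -/

import Mathlib

/-!
For `x > 0`, `1 / x² + 2x - 3 = (x - 1)² (2x + 1) / x² ≥ 0`, with equality only at `x = 1`.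
Integrated against the weight `w = v p`, the three normalisations `∫ w = ∫ φ' w = ∫ w / φ'² = 1`
make this nonnegative integrand integrate to `0`, so `φ' = 1` wherever `w > 0`, up to a null set.
If moreover `w > 0` a.e. and `φ'` is continuous, then `φ' = 1` on all of `[0, 1]`, and `φ 0 = 0`
integrates to `φ = id`.
-/

open MeasureTheory Set

theorem one_div_sq_add_two_mul_sub_three {x : ℝ} (hx : x ≠ 0) :
    1 / x ^ 2 + 2 * x - 3 = (x - 1) ^ 2 * (2 * x + 1) / x ^ 2 := by
  field_simp
  ring

section
variable {α : Type*} [MeasurableSpace α] {μ : Measure α} {g w : α → ℝ}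

theorem ae_eq_one_of_integral_inv_sq_mul_eq_one
    (hg : ∀ᵐ x ∂μ, 0 < g x) (hw : 0 ≤ᵐ[μ] w) (hw₁ : ∫ x, w x ∂μ = 1)
    (hgw : ∫ x, g x * w x ∂μ = 1) (hg₂w : ∫ x, 1 / g x ^ 2 * w x ∂μ = 1) :
    ∀ᵐ x ∂μ, 0 < w x → g x = 1 := by
  have hF_eq : (fun x => (1 / g x ^ 2 + 2 * g x - 3) * w x) =
      fun x => 1 / g x ^ 2 * w x + 2 * (g x * w x) - 3 * w x := by
    ext x; ring
  have hint₂ := integrable_of_integral_eq_one hg₂w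
  have hint₁ := (integrable_of_integral_eq_one hgw).const_mul 2
  have hint₀ := (integrable_of_integral_eq_one hw₁).const_mul 3
  have hF_int : Integrable (fun x => (1 / g x ^ 2 + 2 * g x - 3) * w x) μ := by
    rw [hF_eq]; exact (hint₂.add hint₁).sub hint₀
  have hF_zero : ∫ x, (1 / g x ^ 2 + 2 * g x - 3) * w x ∂μ = 0 := by
    rw [hF_eq, integral_sub (by exact hint₂.add hint₁) hint₀, integral_add hint₂ hint₁,
      integral_const_mul, integral_const_mul, hg₂w, hgw, hw₁]
    norm_num
  have hF_nonneg : 0 ≤ᵐ[μ] fun x => (1 / g x ^ 2 + 2 * g x - 3) * w x := by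
    filter_upwards [hg, hw] with x hgx hwx
    rw [one_div_sq_add_two_mul_sub_three hgx.ne']
    exact mul_nonneg (by positivity) hwx
  filter_upwards [(integral_eq_zero_iff_of_nonneg_ae hF_nonneg hF_int).1 hF_zero, hg]
    with x hx hgx hwx
  rw [Pi.zero_apply, mul_eq_zero, one_div_sq_add_two_mul_sub_three hgx.ne'] at hx
  have : (g x - 1) ^ 2 = 0 := by
    simpa [hwx.ne', hgx.ne', (by linarith : 2 * g x + 1 ≠ 0)] using hx
  linarith [pow_eq_zero_iff (n := 2) two_ne_zero |>.1 this]

theorem ae_withDensity_ofReal_of_ae_pos_imp {P : α → Prop} (hw : AEMeasurable w μ)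
    (h : ∀ᵐ x ∂μ, 0 < w x → P x) :
    ∀ᵐ x ∂μ.withDensity (fun x => ENNReal.ofReal (w x)), P x := by
  rw [ae_withDensity_iff' hw.ennreal_ofReal]
  filter_upwards [h] with x hx hwx
  exact hx (ENNReal.ofReal_pos.1 (pos_iff_ne_zero.2 hwx))

end

theorem eqOn_id_of_hasDerivAt_one {f : ℝ → ℝ} {a b : ℝ}
    (hf : ∀ x ∈ Icc a b, HasDerivAt f 1 x) (ha : f a = a) : EqOn f id (Icc a b) :=
  eq_of_has_deriv_right_eq (fun x hx => (hf x (Ico_subset_Icc_self hx)).hasDerivWithinAt)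
    (fun x _ => (hasDerivAt_id x).hasDerivWithinAt)
    (fun x hx => (hf x hx).continuousAt.continuousWithinAt) continuousOn_id ha

theorem equality_case_core_inequality_general
    (φ p v φ' : ℝ → ℝ)
    (hpnonneg : ∀ c, 0 ≤ p c)
    (hvnonneg : ∀ c, 0 ≤ v c)
    (hφ'pos : ∀ c, 0 < φ' c)
    (hφderiv : ∀ c ∈ Icc (0 : ℝ) 1, HasDerivAt φ (φ' c) c)
    (hφ0 : φ 0 = 0)
    (hvp : ∫ c in (0 : ℝ)..1, v c * p c = 1)
    (hφ'vp : ∫ c in (0 : ℝ)..1, φ' c * v c * p c = 1)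
    (heq : ∫ c in (0 : ℝ)..1, 1 / (φ' c) ^ 2 * v c * p c = 1) :
    (∀ᵐ c ∂((volume.restrict (Icc (0 : ℝ) 1)).withDensity
        (fun c => ENNReal.ofReal (v c * p c))), φ' c = 1) ∧
      ((∀ᵐ c ∂(volume.restrict (Icc (0 : ℝ) 1)), 0 < v c * p c) →
        Continuous φ' → ∀ c ∈ Icc (0 : ℝ) 1, φ c = c) := by
  have h_Icc (f : ℝ → ℝ) : ∫ c in (0 : ℝ)..1, f c = ∫ c in Icc 0 1, f c := by
    rw [intervalIntegral.integral_of_le zero_le_one, integral_Icc_eq_integral_Ioc]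
  simp only [h_Icc, mul_assoc] at hvp hφ'vp heq
  have hae := ae_eq_one_of_integral_inv_sq_mul_eq_one (ae_of_all _ hφ'pos)
    (ae_of_all _ fun c => mul_nonneg (hvnonneg c) (hpnonneg c)) hvp hφ'vp heq
  refine ⟨ae_withDensity_ofReal_of_ae_pos_imp
    (integrable_of_integral_eq_one hvp).aemeasurable hae, fun hpos hcont => ?_⟩
  have hφ'_one : EqOn φ' 1 (Icc 0 1) :=
    Measure.eqOn_Icc_of_ae_eq volume zero_ne_one
      (by filter_upwards [hae, hpos] with c h₁ h₂ using h₁ h₂)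
      hcont.continuousOn continuousOn_const
  exact eqOn_id_of_hasDerivAt_one (fun c hc => by simpa [hφ'_one hc] using hφderiv c hc) hφ0

/-- **Equality case of the core inequality.**  Under the hypotheses that `p` is a
probability density on `[0,1]`, `v : [0,1] → [0,∞)` is measurable with
`∫₀¹ v(c) p(c) dc = 1`, and `φ'` (the positive derivative of a strictly increasing
`φ : [0,1] → [0,1]` with `φ(0) = 0`, `φ(1) = 1`) satisfies
`∫₀¹ φ'(c) v(c) p(c) dc = 1`, the equality `∫₀¹ (1/φ'(c)²) v(c) p(c) dc = 1` forces
`φ'(c) = 1` for almost every `c` with respect to the measure `v(c) p(c) dc`; in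
particular, if `v ⬝ p` is almost everywhere positive on `[0,1]` and `φ'` is continuous,
then `φ` is the identity. -/
theorem equality_case_core_inequality
    (φ p v φ' : ℝ → ℝ)
    (hpmeas : Measurable p) (hpnonneg : ∀ c, 0 ≤ p c)
    (hpden : ∫ c in (0 : ℝ)..1, p c = 1)
    (hvmeas : Measurable v) (hvnonneg : ∀ c, 0 ≤ v c)
    (hφ'meas : Measurable φ') (hφ'pos : ∀ c, 0 < φ' c)
    (hφderiv : ∀ c ∈ Icc (0 : ℝ) 1, HasDerivAt φ (φ' c) c)
    (hφmono : StrictMonoOn φ (Icc 0 1)) (hφmaps : MapsTo φ (Icc 0 1) (Icc 0 1))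
    (hφ0 : φ 0 = 0) (hφ1 : φ 1 = 1)
    (hvp : ∫ c in (0 : ℝ)..1, v c * p c = 1)
    (hφ'vp : ∫ c in (0 : ℝ)..1, φ' c * v c * p c = 1)
    (hint1 : IntervalIntegrable (fun c => 1 / (φ' c) ^ 2 * v c * p c) volume 0 1)
    (hint2 : IntervalIntegrable (fun c => 1 / φ' c * v c * p c) volume 0 1)
    (heq : ∫ c in (0 : ℝ)..1, 1 / (φ' c) ^ 2 * v c * p c = 1) :
    (∀ᵐ c ∂((volume.restrict (Icc (0 : ℝ) 1)).withDensity
        (fun c => ENNReal.ofReal (v c * p c))), φ' c = 1) ∧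
      ((∀ᵐ c ∂(volume.restrict (Icc (0 : ℝ) 1)), 0 < v c * p c) →
        Continuous φ' → ∀ c ∈ Icc (0 : ℝ) 1, φ c = c) :=
  equality_case_core_inequality_general φ p v φ' hpnonneg hvnonneg hφ'pos hφderiv hφ0 hvp hφ'vp heq
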